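/- arXiv:1611.00029 — 4 statements merged into one kernel-verified Lean document; each statement's English description precedes it below -/
import Mathlib

section
/- For every leafless connected multigraph G with a set M of i marked edges, there exists a leafless connected subgraph H of G with cyclomatic number at most i+1 that contains all i marked edges. -/
/-!
Multigraphs are modeled by a map `ends : E → Sym2 V` assigning to each edge its
pair of endpoints.  Subgraphs are given by subsets `F : Finset E` of edges
(together with their incident vertices; isolated vertices are disregarded).
-/

open Finset

variable {V E : Type*}

-- Vertices incident to at least one edge of `F` (isolated vertices disregarded).
open Classical in
noncomputable def vertsOf [Fintype V] (ends : E → Sym2 V) (F : Finset E) : Finset V :=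
  Finset.univ.filter fun v => ∃ e ∈ F, v ∈ ends e

-- Degree of `v` in the multigraph with edge set `F` (loops count twice).
open Classical in
noncomputable def degIn (ends : E → Sym2 V) (F : Finset E) (v : V) : ℕ :=
  2 * (F.filter fun e => ends e = s(v, v)).card +
    (F.filter fun e => v ∈ ends e ∧ ends e ≠ s(v, v)).card

/-- Adjacency via an edge of `F`. -/
def adjIn (ends : E → Sym2 V) (F : Finset E) (v w : V) : Prop :=
  ∃ e ∈ F, ends e = s(v, w)

/-- The multigraph with edge set `F` is connected (on its non-isolated vertices). -/
def connIn [Fintype V] (ends : E → Sym2 V) (F : Finset E) : Prop :=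
  ∀ v ∈ vertsOf ends F, ∀ w ∈ vertsOf ends F, Relation.ReflTransGen (adjIn ends F) v w

/-- The multigraph with edge set `F` has no vertex of degree 1. -/
def leaflessIn [Fintype V] (ends : E → Sym2 V) (F : Finset E) : Prop :=
  ∀ v ∈ vertsOf ends F, degIn ends F v ≠ 1

/-- Cyclomatic number of a connected multigraph with edge set `F`:
`#edges - #vertices + 1`. -/
noncomputable def cyclomatic [Fintype V] (ends : E → Sym2 V) (F : Finset E) : ℤ :=
  (F.card : ℤ) - (vertsOf ends F).card + 1

/-!
Add the marked edges one at a time, keeping a connected leafless subgraph whose cyclomatic number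
exceeds the number of edges added by at most one. To add `a = s(x, y)`, join `x` to the current
subgraph by a shortest path, which keeps the cyclomatic number and makes `x` the only leaf, then
add `a`: afterwards only `y` can be a leaf, and only if `y` is new, in which case the cyclomatic
number has not grown. A leaf is cured at a cost of one: since the whole graph is leafless, it has
an unused edge, and following unused edges through new vertices (a tentacle) must eventually land
on an old vertex.
-/

def leavesSubset [Fintype V] (ends : E → Sym2 V) (F : Finset E) (B : Finset V) : Prop :=
  ∀ v ∈ vertsOf ends F, degIn ends F v = 1 → v ∈ B

section
variable {ends : E → Sym2 V}

theorem degIn_insert [DecidableEq V] [DecidableEq E] {T : Finset E} {f : E} {c u : V}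
    (hf : ends f = s(c, u)) (hfT : f ∉ T) (v : V) :
    degIn ends (insert f T) v =
      degIn ends T v + (if v = c then 1 else 0) + (if v = u then 1 else 0) := by
  have hfilter (p : E → Prop) [DecidablePred p] : f ∉ T.filter p :=
    fun h => hfT (mem_filter.1 h).1
  simp only [degIn, filter_insert, hf]
  split_ifs <;> simp_all [card_insert_of_notMem] <;> omega

theorem adjIn_mono {F F' : Finset E} (h : F ⊆ F') {v w : V} (hvw : adjIn ends F v w) :
    adjIn ends F' v w :=
  let ⟨e, he, hvw⟩ := hvw
  ⟨e, h he, hvw⟩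

theorem adjIn_symm {F : Finset E} {v w : V} (hvw : adjIn ends F v w) : adjIn ends F w v :=
  let ⟨e, he, hvw⟩ := hvw
  ⟨e, he, hvw.trans Sym2.eq_swap⟩

theorem reflTransGen_adjIn_symm {F : Finset E} {v w : V}
    (h : Relation.ReflTransGen (adjIn ends F) v w) : Relation.ReflTransGen (adjIn ends F) w v := by
  induction h with
  | refl => rfl
  | tail _ hab ih => exact .head (adjIn_symm hab) ih

end

section
variable [Fintype V] {ends : E → Sym2 V}

@[simp] theorem mem_vertsOf {F : Finset E} {v : V} :
    v ∈ vertsOf ends F ↔ ∃ e ∈ F, v ∈ ends e := by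
  simp [vertsOf]

theorem vertsOf_mono {F F' : Finset E} (h : F ⊆ F') : vertsOf ends F ⊆ vertsOf ends F' := by
  intro v
  simp only [mem_vertsOf]
  exact fun ⟨e, he, hv⟩ => ⟨e, h he, hv⟩

theorem vertsOf_insert [DecidableEq V] [DecidableEq E] {T : Finset E} {f : E} {c u : V}
    (hf : ends f = s(c, u)) : vertsOf ends (insert f T) = insert c (insert u (vertsOf ends T)) := by
  ext v
  simp [hf, or_assoc]

theorem degIn_eq_zero_iff {F : Finset E} {v : V} : degIn ends F v = 0 ↔ v ∉ vertsOf ends F := by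
  simp only [degIn, Nat.add_eq_zero_iff, mul_eq_zero, OfNat.ofNat_ne_zero, false_or,
    card_eq_zero, filter_eq_empty_iff, mem_vertsOf, not_exists, not_and, not_not]
  constructor
  · exact fun ⟨hloop, hlink⟩ e he hv => hloop he (hlink he hv)
  · exact fun h => ⟨fun e he hloop => h e he (hloop ▸ Sym2.mem_mk_left v v),
      fun e he hv => absurd hv (h e he)⟩

theorem degIn_pos_iff {F : Finset E} {v : V} : 0 < degIn ends F v ↔ v ∈ vertsOf ends F := by
  rw [Nat.pos_iff_ne_zero, Ne, degIn_eq_zero_iff, not_not]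

theorem cyclomatic_add_card_vertsOf (F : Finset E) :
    cyclomatic ends F + (vertsOf ends F).card = F.card + 1 := by
  unfold cyclomatic
  ring

theorem cyclomatic_insert_of_notMem [DecidableEq E] {T : Finset E} {f : E}
    {c u : V} (hf : ends f = s(c, u)) (hfT : f ∉ T) (hc : c ∈ vertsOf ends T)
    (hu : u ∉ vertsOf ends T) : cyclomatic ends (insert f T) = cyclomatic ends T := by
  classical
  rw [cyclomatic, cyclomatic, vertsOf_insert hf, insert_eq_of_mem (mem_insert_of_mem hc),
    card_insert_of_notMem hu, card_insert_of_notMem hfT]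
  push_cast
  ring

theorem cyclomatic_insert_of_mem [DecidableEq E] {T : Finset E} {f : E}
    {c u : V} (hf : ends f = s(c, u)) (hfT : f ∉ T) (hc : c ∈ vertsOf ends T)
    (hu : u ∈ vertsOf ends T) : cyclomatic ends (insert f T) = cyclomatic ends T + 1 := by
  classical
  rw [cyclomatic, cyclomatic, vertsOf_insert hf, insert_eq_of_mem (mem_insert_of_mem hc),
    insert_eq_of_mem hu, card_insert_of_notMem hfT]
  push_cast
  ring

theorem connIn_insert [DecidableEq E] {T : Finset E} {f : E} {c u : V}
    (hf : ends f = s(c, u))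
    (hc : ∀ v ∈ vertsOf ends T, Relation.ReflTransGen (adjIn ends T) v c) :
    connIn ends (insert f T) := by
  classical
  have hreach : ∀ v ∈ vertsOf ends (insert f T),
      Relation.ReflTransGen (adjIn ends (insert f T)) v c := by
    rw [vertsOf_insert hf]
    intro v hv
    rcases mem_insert.1 hv with rfl | hv
    · rfl
    rcases mem_insert.1 hv with rfl | hv
    · exact .single ⟨f, mem_insert_self f T, hf.trans Sym2.eq_swap⟩
    · exact Relation.ReflTransGen.mono (fun _ _ => adjIn_mono (subset_insert f T)) _ _ (hc v hv)
  exact fun v hv w hw => (hreach v hv).trans (reflTransGen_adjIn_symm (hreach w hw))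

theorem leavesSubset_empty_iff {F : Finset E} : leavesSubset ends F ∅ ↔ leaflessIn ends F := by
  simp [leavesSubset, leaflessIn]

theorem leavesSubset.mono {F : Finset E} {B B' : Finset V} (h : leavesSubset ends F B)
    (hB : B ⊆ B') : leavesSubset ends F B' :=
  fun v hv hdeg => hB (h v hv hdeg)

theorem leavesSubset.erase_of_degIn_ne_one [DecidableEq V] {F : Finset E} {B : Finset V} {c : V}
    (h : leavesSubset ends F B) (hc : degIn ends F c ≠ 1) : leavesSubset ends F (B.erase c) :=
  fun v hv hdeg => mem_erase.2 ⟨fun hvc => hc (hvc ▸ hdeg), h v hv hdeg⟩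

theorem leavesSubset.insert_edge [DecidableEq V] [DecidableEq E] {T : Finset E} {B : Finset V}
    {f : E} {c u : V} (h : leavesSubset ends T B) (hf : ends f = s(c, u)) (hfT : f ∉ T)
    (hc : c ∈ vertsOf ends T) : leavesSubset ends (insert f T) (insert u (B.erase c)) := by
  intro v _ hdeg
  rw [degIn_insert hf hfT] at hdeg
  have hcdeg := degIn_pos_iff.2 hc
  by_cases hvu : v = u
  · subst hvu
    exact mem_insert_self v _
  by_cases hvc : v = c
  · subst hvc
    simp only [if_true] at hdeg
    omega
  simp only [hvc, hvu, if_false, add_zero] at hdeg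
  exact mem_insert_of_mem (mem_erase.2 ⟨hvc, h v (degIn_pos_iff.1 (by omega)) hdeg⟩)

theorem leavesSubset.insert_edge_of_mem [DecidableEq V] [DecidableEq E] {T : Finset E}
    {B : Finset V} {f : E} {c u : V} (h : leavesSubset ends T B) (hf : ends f = s(c, u))
    (hfT : f ∉ T) (hc : c ∈ vertsOf ends T) (hu : u ∈ vertsOf ends T) :
    leavesSubset ends (insert f T) (B.erase c) := by
  refine ((h.insert_edge hf hfT hc).erase_of_degIn_ne_one ?_).mono (erase_insert_subset _ _)
  rw [degIn_insert hf hfT, if_pos rfl]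
  have := degIn_pos_iff.2 hu
  split_ifs <;> omega

theorem leavesSubset.exists_insert_edge [DecidableEq V] [DecidableEq E] {T : Finset E}
    {B : Finset V} {f : E} {c u : V} (h : leavesSubset ends T B) (hf : ends f = s(c, u))
    (hc : c ∈ vertsOf ends T) :
    ∃ B', leavesSubset ends (insert f T) B' ∧
      cyclomatic ends (insert f T) + B'.card ≤ cyclomatic ends T + (B.erase c).card + 1 := by
  by_cases hfT : f ∈ T
  · refine ⟨B, by rwa [insert_eq_of_mem hfT], ?_⟩
    have := pred_card_le_card_erase (a := c) (s := B)
    rw [insert_eq_of_mem hfT]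
    omega
  by_cases hu : u ∈ vertsOf ends T
  · exact ⟨B.erase c, h.insert_edge_of_mem hf hfT hc hu,
      by rw [cyclomatic_insert_of_mem hf hfT hc hu]; omega⟩
  · refine ⟨insert u (B.erase c), h.insert_edge hf hfT hc, ?_⟩
    have := card_insert_le u (B.erase c)
    rw [cyclomatic_insert_of_notMem hf hfT hc hu]
    omega

end

section
variable [Fintype E] {ends : E → Sym2 V}

theorem exists_notMem_of_degIn_lt {T : Finset E} {v : V}
    (h : degIn ends T v < degIn ends univ v) : ∃ f ∉ T, v ∈ ends f := by
  classical
  by_contra! hT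
  have hsub (p : E → Prop) [DecidablePred p] (hp : ∀ e, p e → v ∈ ends e) :
      univ.filter p ⊆ T.filter p := by
    intro e he
    rw [mem_filter] at he ⊢
    exact ⟨by_contra fun heT => hT e heT (hp e he.2), he.2⟩
  have hloops := card_le_card (hsub _ fun e (he : ends e = s(v, v)) => he ▸ Sym2.mem_mk_left v v)
  have hlinks := card_le_card (hsub (fun e => v ∈ ends e ∧ ends e ≠ s(v, v)) fun _ he => he.1)
  simp only [degIn] at h
  omega

def reachWithin (ends : E → Sym2 V) (W : Set V) : ℕ → Set V
  | 0 => W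
  | n + 1 => reachWithin ends W n ∪ {v | ∃ w ∈ reachWithin ends W n, adjIn ends univ v w}

theorem exists_mem_reachWithin {W : Set V} {v w : V}
    (h : Relation.ReflTransGen (adjIn ends univ) v w) (hw : w ∈ W) :
    ∃ n, v ∈ reachWithin ends W n := by
  induction h using Relation.ReflTransGen.head_induction_on with
  | refl => exact ⟨0, hw⟩
  | head hvv' _ ih =>
    obtain ⟨n, hn⟩ := ih
    exact ⟨n + 1, Or.inr ⟨_, hn, hvv'⟩⟩

end

section
variable [Fintype V] [Fintype E] [DecidableEq V] [DecidableEq E] {ends : E → Sym2 V}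

theorem exists_superset_leavesSubset_erase
    (hG : leaflessIn ends univ) {T : Finset E} {B : Finset V} (hT : connIn ends T)
    (hB : leavesSubset ends T B) (c : V) :
    ∃ T' ⊇ T, connIn ends T' ∧ leavesSubset ends T' (B.erase c) ∧
      cyclomatic ends T' ≤ cyclomatic ends T + 1 := by
  induction hn : Tᶜ.card using Nat.strong_induction_on generalizing T B c with
  | _ n ih =>
  by_cases hc1 : degIn ends T c ≠ 1
  · exact ⟨T, subset_rfl, hT, hB.erase_of_degIn_ne_one hc1, by linarith⟩
  have hcT : c ∈ vertsOf ends T := degIn_pos_iff.1 (by omega)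
  obtain ⟨f, hfT, hcf⟩ : ∃ f ∉ T, c ∈ ends f := by
    have hcG := vertsOf_mono (subset_univ T) hcT
    have := hG c hcG
    have := degIn_pos_iff.2 hcG
    exact exists_notMem_of_degIn_lt (by omega)
  obtain ⟨u, hf⟩ := Sym2.mem_iff_exists.1 hcf
  have hT1 : connIn ends (insert f T) := connIn_insert hf (fun v hv => hT v hv c hcT)
  by_cases hu : u ∈ vertsOf ends T
  · exact ⟨insert f T, subset_insert f T, hT1, hB.insert_edge_of_mem hf hfT hcT hu,
      (cyclomatic_insert_of_mem hf hfT hcT hu).le⟩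
  -- `u` is new, hence the only new leaf: the tentacle continues from it
  have hlt : (insert f T)ᶜ.card < n := by
    rw [← hn, compl_insert]
    exact card_erase_lt_of_mem (mem_compl.2 hfT)
  obtain ⟨T', hT1T', hT', hB', hcyc⟩ := ih _ hlt hT1 (hB.insert_edge hf hfT hcT) u rfl
  refine ⟨T', (subset_insert f T).trans hT1T', hT', hB'.mono (erase_insert_subset _ _), ?_⟩
  rwa [cyclomatic_insert_of_notMem hf hfT hcT hu] at hcyc

theorem exists_leaflessIn_superset (hG : leaflessIn ends univ)
    {T : Finset E} {B : Finset V} (hT : connIn ends T) (hB : leavesSubset ends T B) :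
    ∃ T' ⊇ T, connIn ends T' ∧ leaflessIn ends T' ∧
      cyclomatic ends T' ≤ cyclomatic ends T + B.card := by
  induction B using Finset.induction_on generalizing T with
  | empty => exact ⟨T, subset_rfl, hT, leavesSubset_empty_iff.1 hB, by simp⟩
  | insert c B hcB ih =>
    obtain ⟨T1, hTT1, hT1, hB1, hcyc1⟩ := exists_superset_leavesSubset_erase hG hT hB c
    rw [erase_insert hcB] at hB1
    obtain ⟨T', hT1T', hT', hl, hcyc⟩ := ih hT1 hB1
    refine ⟨T', hTT1.trans hT1T', hT', hl, ?_⟩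
    rw [card_insert_of_notMem hcB]
    push_cast
    linarith

theorem exists_superset_mem_vertsOf_of_mem_reachWithin
    {F : Finset E} {B : Finset V} (hF : connIn ends F) (hB : leavesSubset ends F B) :
    ∀ n, ∀ x ∈ reachWithin ends (vertsOf ends F) n, ∃ T ⊇ F, connIn ends T ∧
      leavesSubset ends T (insert x B) ∧ x ∈ vertsOf ends T ∧
      cyclomatic ends T ≤ cyclomatic ends F ∧
      ↑(vertsOf ends T) ⊆ reachWithin ends (vertsOf ends F) n
  | 0, x, hx => ⟨F, subset_rfl, hF, hB.mono (subset_insert x B), hx, le_rfl, subset_rfl⟩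
  | n + 1, x, hx => by
    by_cases hxn : x ∈ reachWithin ends (vertsOf ends F) n
    · obtain ⟨T, hFT, hT, hBT, hxT, hcyc, hTn⟩ :=
        exists_superset_mem_vertsOf_of_mem_reachWithin hF hB n x hxn
      exact ⟨T, hFT, hT, hBT, hxT, hcyc, hTn.trans Set.subset_union_left⟩
    -- `x` is first reached at step `n + 1`, so it is not yet a vertex of the path to `w`
    obtain ⟨w, hwn, e, -, hxw⟩ := hx.resolve_left hxn
    obtain ⟨T, hFT, hT, hBT, hwT, hcyc, hTn⟩ :=
      exists_superset_mem_vertsOf_of_mem_reachWithin hF hB n w hwn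
    have he : ends e = s(w, x) := hxw.trans Sym2.eq_swap
    have hxT : x ∉ vertsOf ends T := fun h => hxn (hTn h)
    have heT : e ∉ T := fun h => hxT (mem_vertsOf.2 ⟨e, h, by simp [he]⟩)
    refine ⟨insert e T, hFT.trans (subset_insert e T),
      connIn_insert he (fun v hv => hT v hv w hwT),
      (hBT.insert_edge he heT hwT).mono (insert_subset_insert x (erase_insert_subset w B)),
      by simp [vertsOf_insert he], (cyclomatic_insert_of_notMem he heT hwT hxT).trans_le hcyc, ?_⟩
    rw [vertsOf_insert he, coe_insert, coe_insert]
    exact Set.insert_subset (Or.inl hwn) (Set.insert_subset hx (hTn.trans Set.subset_union_left))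

theorem exists_superset_mem_vertsOf
    (hconn : connIn ends univ) {F : Finset E} {B : Finset V} (hF : connIn ends F)
    (hB : leavesSubset ends F B) (hFne : (vertsOf ends F).Nonempty) {x : V}
    (hx : x ∈ vertsOf ends univ) :
    ∃ T ⊇ F, connIn ends T ∧ leavesSubset ends T (insert x B) ∧ x ∈ vertsOf ends T ∧
      cyclomatic ends T ≤ cyclomatic ends F := by
  obtain ⟨w, hw⟩ := hFne
  obtain ⟨n, hn⟩ := exists_mem_reachWithin (W := vertsOf ends F)
    (hconn x hx w (vertsOf_mono (subset_univ F) hw)) hw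
  obtain ⟨T, hFT, hT, hBT, hxT, hcyc, -⟩ :=
    exists_superset_mem_vertsOf_of_mem_reachWithin hF hB n x hn
  exact ⟨T, hFT, hT, hBT, hxT, hcyc⟩

theorem exists_superset_insert (hG : leaflessIn ends univ)
    (hconn : connIn ends univ) {F : Finset E} (hF : connIn ends F) (hFl : leaflessIn ends F)
    (a : E) : ∃ F' ⊇ insert a F, connIn ends F' ∧ leaflessIn ends F' ∧
      cyclomatic ends F' ≤ cyclomatic ends F + 1 := by
  obtain ⟨⟨x, y⟩, hxy⟩ := Sym2.mk_surjective (ends a)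
  replace hxy : ends a = s(x, y) := hxy.symm
  suffices ∃ T ⊇ insert a F, ∃ B, connIn ends T ∧ leavesSubset ends T B ∧
      cyclomatic ends T + B.card ≤ cyclomatic ends F + 1 by
    obtain ⟨T, haT, B, hT, hB, hcyc⟩ := this
    obtain ⟨F', hTF', hF', hl, hcyc'⟩ := exists_leaflessIn_superset hG hT hB
    exact ⟨F', haT.trans hTF', hF', hl, hcyc'.trans hcyc⟩
  rcases (vertsOf ends F).eq_empty_or_nonempty with hF0 | hFne
  · refine ⟨insert a F, subset_rfl, vertsOf ends (insert a F), connIn_insert hxy (by simp [hF0]),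
      fun v hv _ => hv, ?_⟩
    have := card_insert_le a F
    rw [cyclomatic_add_card_vertsOf, cyclomatic, hF0, card_empty]
    push_cast
    omega
  · have hx : x ∈ vertsOf ends univ := mem_vertsOf.2 ⟨a, mem_univ a, by simp [hxy]⟩
    obtain ⟨T0, hFT0, hT0, hB0, hxT0, hcyc0⟩ :=
      exists_superset_mem_vertsOf hconn hF (leavesSubset_empty_iff.2 hFl) hFne hx
    obtain ⟨B, hB, hcyc⟩ := hB0.exists_insert_edge hxy hxT0
    refine ⟨insert a T0, insert_subset_insert a hFT0, B,
      connIn_insert hxy (fun v hv => hT0 v hv x hxT0), hB, ?_⟩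
    simp only [insert_empty, erase_singleton, card_empty, CharP.cast_eq_zero, add_zero] at hcyc
    linarith

end

/-- Every leafless connected multigraph with a set `M` of marked
edges has a leafless connected subgraph of cyclomatic number at most `|M| + 1`
containing all marked edges. -/
theorem leafless_connected_subgraph_containing_marked_edges
    [Fintype V] [Fintype E] (ends : E → Sym2 V)
    (hconn : connIn ends (Finset.univ : Finset E))
    (hleafless : leaflessIn ends (Finset.univ : Finset E))
    (M : Finset E) :
    ∃ F : Finset E, M ⊆ F ∧ connIn ends F ∧ leaflessIn ends F ∧
      cyclomatic ends F ≤ (M.card : ℤ) + 1 := by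
  classical
  induction M using Finset.induction_on with
  | empty =>
    exact ⟨∅, subset_rfl, by simp [connIn], by simp [leaflessIn], by simp [cyclomatic]⟩
  | insert a M haM ih =>
    obtain ⟨F, hMF, hF, hFl, hcyc⟩ := ih
    obtain ⟨F', haF', hF', hF'l, hcyc'⟩ := exists_superset_insert hleafless hconn hF hFl a
    refine ⟨F', (insert_subset_insert a hMF).trans haF', hF', hF'l, ?_⟩
    rw [card_insert_of_notMem haM]
    push_cast
    linarith
end

section
/- Let H be a hash family in which for every set T of at most 2 keys the values are uniform and independent (2-wise independence), combined as h_i(x) = (f_i(x) + Σ_{j=1}^c z^{(i)}[j, g_j(x)]) mod m with independently chosen 2-wise independent f_i, 2-universal g_j, and fully random tables z^{(i)}. Then for every set T ⊆ U, conditioned on the event that some g_j has at most one collision on T (the event good_T), the vector of hash values (h_1(x),...,h_d(x))_{x∈T} is uniformly distributed on ([m]^d)^T. -/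
open Finset

-- Probability of the event `P` on a finite sample space weighted by `w`.
open Classical in
noncomputable def Pr {Ω : Type*} [Fintype Ω] (w : Ω → ℝ) (P : Ω → Prop) : ℝ :=
  ∑ ω ∈ Finset.univ.filter P, w ω

/-- Sample space of the hash class `Z`: the functions `f_1,…,f_d`, the functions
`g_1,…,g_c`, and the random tables `z^{(1)},…,z^{(d)}` (one row per `g_j`). -/
abbrev HashΩ (U : Type*) (m ℓ d c : ℕ) :=
  (Fin d → U → Fin m) × (Fin c → U → Fin ℓ) × (Fin d → Fin c → Fin ℓ → Fin m)

/-- Joint distribution: the `f_i` and `g_j` are chosen independently according to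
`wf i` resp. `wg j`, and all table entries are uniform and independent. -/
noncomputable def hashWeight {U : Type*} [Fintype U] {m ℓ d c : ℕ}
    (wf : Fin d → (U → Fin m) → ℝ) (wg : Fin c → (U → Fin ℓ) → ℝ)
    (ω : HashΩ U m ℓ d c) : ℝ :=
  (∏ i, wf i (ω.1 i)) * (∏ j, wg j (ω.2.1 j)) *
    (1 / (Fintype.card (Fin d → Fin c → Fin ℓ → Fin m) : ℝ))

/-- `w` is a distribution on a 2-wise independent class of functions `U → [m]`. -/
def twoWiseIndep {U : Type*} [Fintype U] [DecidableEq U] {m : ℕ} (w : (U → Fin m) → ℝ) : Prop :=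
  (∀ f, 0 ≤ w f) ∧ (∑ f, w f = 1) ∧
    ∀ x y : U, x ≠ y → ∀ a b : Fin m,
      (∑ f ∈ Finset.univ.filter fun f : U → Fin m => f x = a ∧ f y = b, w f)
        = 1 / (m : ℝ) ^ 2

/-- `w` is a distribution on a 2-universal class of functions `U → [ℓ]`. -/
def twoUniversal {U : Type*} [Fintype U] [DecidableEq U] {ℓ : ℕ} (w : (U → Fin ℓ) → ℝ) : Prop :=
  (∀ g, 0 ≤ w g) ∧ (∑ g, w g = 1) ∧
    ∀ x y : U, x ≠ y →
      (∑ g ∈ Finset.univ.filter fun g : U → Fin ℓ => g x = g y, w g) ≤ 2 / (ℓ : ℝ)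

/-- The hash function `h_i(x) = (f_i(x) + ∑_j z^{(i)}[j, g_j(x)]) mod m`
(addition in `Fin m` is addition mod `m`). -/
def hashFun {U : Type*} {m ℓ d c : ℕ} [NeZero m] (ω : HashΩ U m ℓ d c) (i : Fin d)
    (x : U) : Fin m :=
  ω.1 i x + ∑ j : Fin c, ω.2.2 i j (ω.2.1 j x)

/-- The event `good_T`: the deficiency is at most 1, i.e. some `g_j` has at most
one collision on `T` (equivalently `|g_j(T)| ≥ |T| - 1`). -/
def goodT {U : Type*} [Fintype U] [DecidableEq U] {m ℓ d c : ℕ} (T : Finset U)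
    (ω : HashΩ U m ℓ d c) : Prop :=
  ∃ j : Fin c, T.card ≤ (T.image (ω.2.1 j)).card + 1

/-! Fix the `g_j` and an index `j₀` at which `g_{j₀}` has at most one collision on `T`.
The coordinates `h_1, …, h_d` are independent, so it suffices to treat one of them. Fix `f_i`
and every row of `z^{(i)}` except the uniform row `r = z^{(i)}[j₀, ·]`. The constraints
`h_i(x) = a_i(x)` (`x ∈ T`) prescribe `r` on `g_{j₀}(T)`; they are met by a proportion
`m^{-|g_{j₀}(T)|}` of rows if the prescribed values agree on the fibres of `g_{j₀}`, and by none
otherwise. If `g_{j₀}` is injective on `T` they always agree; if it has a single collision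
`g_{j₀}(x₀) = g_{j₀}(y₀)`, agreement is an event `f_i(x₀) - f_i(y₀) = δ` with `δ` independent of
`f_i`, of probability `1/m` by 2-wise independence. Either way the probability is `m^{-|T|}`. -/

section FiberwiseConst

variable {U ι M : Type*}

def FiberwiseConstOn (T : Finset U) (g : U → ι) (s : U → M) : Prop :=
  ∀ x ∈ T, ∀ y ∈ T, g x = g y → s x = s y

variable {T : Finset U} {g : U → ι} {s : U → M}

theorem exists_ne_map_eq_injOn_erase [DecidableEq U] [DecidableEq ι]
    (h : #T = #(T.image g) + 1) :
    ∃ x₀ ∈ T, ∃ y₀ ∈ T, x₀ ≠ y₀ ∧ g x₀ = g y₀ ∧ Set.InjOn g (T.erase y₀) := by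
  obtain ⟨x₀, hx₀, y₀, hy₀, hne, hg⟩ := exists_ne_map_eq_of_card_lt_of_maps_to
    (by omega : #(T.image g) < #T) fun x hx => mem_image_of_mem g hx
  refine ⟨x₀, hx₀, y₀, hy₀, hne, hg, ?_⟩
  have himage : (T.erase y₀).image g = T.image g := by
    refine (image_subset_image (erase_subset _ _)).antisymm fun v hv => ?_
    obtain ⟨x, hx, rfl⟩ := mem_image.1 hv
    by_cases hxy : x = y₀
    · exact mem_image.2 ⟨x₀, mem_erase.2 ⟨hne, hx₀⟩, hxy ▸ hg⟩
    · exact mem_image_of_mem g (mem_erase.2 ⟨hxy, hx⟩)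
  rw [← card_image_iff, himage, card_erase_of_mem hy₀]
  omega

theorem fiberwiseConstOn_iff_of_injOn_erase [DecidableEq U] {x₀ y₀ : U} (hx₀ : x₀ ∈ T)
    (hy₀ : y₀ ∈ T) (hne : x₀ ≠ y₀) (hg : g x₀ = g y₀) (hinj : Set.InjOn g (T.erase y₀)) :
    FiberwiseConstOn T g s ↔ s x₀ = s y₀ := by
  refine ⟨fun hs => hs x₀ hx₀ y₀ hy₀ hg, fun hs x hx y hy hxy => ?_⟩
  let φ (z : U) : U := if z = y₀ then x₀ else z
  have hφ (z : U) (hz : z ∈ T) : φ z ∈ T.erase y₀ ∧ g (φ z) = g z ∧ s (φ z) = s z := by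
    by_cases h : z = y₀ <;> simp [φ, h, hx₀, hz, hne, hg, hs]
  obtain ⟨hφx, hgx, hsx⟩ := hφ x hx
  obtain ⟨hφy, hgy, hsy⟩ := hφ y hy
  rw [← hsx, ← hsy, hinj hφx hφy (by rw [hgx, hgy, hxy])]

variable [Fintype ι] [DecidableEq ι] [Fintype M]
  [DecidablePred fun r : ι → M => ∀ x ∈ T, r (g x) = s x]

theorem card_filter_forall_comp_eq (hs : FiberwiseConstOn T g s) :
    #{r : ι → M | ∀ x ∈ T, r (g x) = s x} =
      Fintype.card M ^ (Fintype.card ι - #(T.image g)) := by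
  classical
  have hfilter : ({r : ι → M | ∀ x ∈ T, r (g x) = s x} : Finset _) = Fintype.piFinset fun v =>
      if h : ∃ x ∈ T, g x = v then {s h.choose} else univ := by
    ext r
    simp only [mem_filter, mem_univ, true_and, Fintype.mem_piFinset]
    constructor
    · intro hr v
      split_ifs with h
      · obtain ⟨hx, hgx⟩ := h.choose_spec
        rw [mem_singleton, ← hr _ hx, hgx]
      · exact mem_univ _
    · intro hr x hx
      have h : ∃ y ∈ T, g y = g x := ⟨x, hx, rfl⟩
      have := hr (g x)
      rw [dif_pos h, mem_singleton] at this
      rw [this, hs _ h.choose_spec.1 x hx h.choose_spec.2]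
  have hcard (v : ι) : #(if h : ∃ x ∈ T, g x = v then {s h.choose} else univ) =
      if v ∈ T.image g then 1 else Fintype.card M := by
    by_cases h : ∃ x ∈ T, g x = v <;> simp [h, mem_image]
  rw [hfilter, Fintype.card_piFinset, Fintype.prod_congr _ _ hcard, prod_ite, prod_const_one,
    one_mul, prod_const, filter_not, filter_mem_eq_inter, univ_inter, card_univ_sdiff]

theorem filter_forall_comp_eq_eq_empty (hs : ¬ FiberwiseConstOn T g s) :
    ({r : ι → M | ∀ x ∈ T, r (g x) = s x} : Finset _) = ∅ := by
  simp only [FiberwiseConstOn, not_forall] at hs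
  obtain ⟨x, hx, y, hy, hgxy, hsxy⟩ := hs
  exact filter_false_of_mem fun r _ hr => hsxy (by rw [← hr x hx, ← hr y hy, hgxy])

end FiberwiseConst

namespace twoWiseIndep

variable {U : Type*} [Fintype U] [DecidableEq U] {m : ℕ} [NeZero m] {w : (U → Fin m) → ℝ}

theorem pr_sub_eq (hw : twoWiseIndep w) {x y : U} (hxy : x ≠ y) (δ : Fin m) :
    Pr w (fun f => f x - f y = δ) = 1 / m := by
  classical
  have hfiber (b : Fin m) :
      ∑ f ∈ {f : U → Fin m | f x - f y = δ} with f y = b, w f = 1 / m ^ 2 := by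
    rw [filter_filter, ← hw.2.2 x y hxy (δ + b) b]
    refine sum_congr (filter_congr fun f _ => ?_) fun _ _ => rfl
    constructor
    · rintro ⟨h, rfl⟩
      exact ⟨by rw [← h, sub_add_cancel], rfl⟩
    · rintro ⟨h, rfl⟩
      exact ⟨by rw [h, add_sub_cancel_right], rfl⟩
  rw [Pr, ← sum_fiberwise _ (fun f => f y), sum_congr rfl fun b _ => by convert hfiber b]
  simp only [one_div, sum_const, card_univ, Fintype.card_fin, nsmul_eq_mul]
  field_simp

theorem pr_fiberwiseConstOn_sub (hw : twoWiseIndep w) {ι : Type*} [DecidableEq ι] {T : Finset U}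
    {g : U → ι} (hg : #T ≤ #(T.image g) + 1) (t : U → Fin m) :
    Pr w (fun f => FiberwiseConstOn T g (t - f)) = (1 / m) ^ (#T - #(T.image g)) := by
  classical
  rcases (card_image_le : #(T.image g) ≤ #T).eq_or_lt with hinj | hcoll
  · have hconst (f : U → Fin m) : FiberwiseConstOn T g (t - f) := fun x hx y hy hxy => by
      rw [card_image_iff.1 hinj hx hy hxy]
    rw [Pr, filter_true_of_mem fun f _ => hconst f, hinj, Nat.sub_self, pow_zero, hw.2.1]
  · obtain ⟨x₀, hx₀, y₀, hy₀, hne, hgxy, hinj⟩ :=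
      exists_ne_map_eq_injOn_erase (by omega : #T = #(T.image g) + 1)
    have hiff (f : U → Fin m) : FiberwiseConstOn T g (t - f) ↔ f x₀ - f y₀ = t x₀ - t y₀ := by
      rw [fiberwiseConstOn_iff_of_injOn_erase hx₀ hy₀ hne hgxy hinj, Pi.sub_apply, Pi.sub_apply,
        sub_eq_sub_iff_sub_eq_sub, eq_comm]
    rw [show #T - #(T.image g) = 1 by omega, pow_one, ← hw.pr_sub_eq hne (t x₀ - t y₀)]
    exact congrArg (Pr w) (funext fun f => propext (hiff f))

end twoWiseIndep

section HashCoordinate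

variable {U κ ι : Type*} [Fintype U] [DecidableEq U] [Fintype κ] [DecidableEq κ] [Fintype ι]
  [DecidableEq ι] {m : ℕ} [NeZero m]

-- The right-hand side is shaped as `(t - f) x` to match `twoWiseIndep.pr_fiberwiseConstOn_sub`.
theorem card_filter_add_sum_eq (T : Finset U) (g : κ → U → ι) (j₀ : κ) (f b : U → Fin m) :
    #{z : κ → ι → Fin m | ∀ x ∈ T, f x + ∑ j, z j (g j x) = b x} =
      ∑ zr : {j // j ≠ j₀} → ι → Fin m,
        #{r : ι → Fin m | ∀ x ∈ T, r (g j₀ x) = ((fun x => b x - ∑ j, zr j (g j x)) - f) x} := by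
  simp only [card_filter]
  rw [sum_comm, ← Fintype.sum_prod_type', ← (Equiv.funSplitAt j₀ (ι → Fin m)).sum_comp
    (fun p => if ∀ x ∈ T, p.1 (g j₀ x) = ((fun x => b x - ∑ j, p.2 j (g j x)) - f) x then 1 else 0)]
  refine sum_congr rfl fun z _ => if_congr (forall₂_congr fun x _ => ?_) rfl rfl
  rw [Fintype.sum_eq_add_sum_subtype_ne _ j₀, Equiv.funSplitAt_apply, Pi.sub_apply, sub_sub,
    eq_sub_iff_add_eq, add_comm, add_assoc]

theorem twoWiseIndep.sum_mul_card_filter_add_sum_eq {w : (U → Fin m) → ℝ} (hw : twoWiseIndep w)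
    {T : Finset U} (g : κ → U → ι) (j₀ : κ) (hg : #T ≤ #(T.image (g j₀)) + 1) (b : U → Fin m) :
    ∑ f, w f * #{z : κ → ι → Fin m | ∀ x ∈ T, f x + ∑ j, z j (g j x) = b x} =
      Fintype.card (κ → ι → Fin m) * (1 / m) ^ #T := by
  have hm : (m : ℝ) ≠ 0 := Nat.cast_ne_zero.2 (NeZero.ne m)
  have hrow (t : U → Fin m) :
      ∑ f, w f * #{r : ι → Fin m | ∀ x ∈ T, r (g j₀ x) = (t - f) x} =
        (m : ℝ) ^ Fintype.card ι * (1 / m) ^ #T :=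
    calc ∑ f, w f * #{r : ι → Fin m | ∀ x ∈ T, r (g j₀ x) = (t - f) x}
        = (m : ℝ) ^ (Fintype.card ι - #(T.image (g j₀))) *
            Pr w (fun f => FiberwiseConstOn T (g j₀) (t - f)) := by
          rw [Pr, sum_filter, mul_sum]
          refine sum_congr rfl fun f _ => ?_
          split_ifs with hs
          · rw [card_filter_forall_comp_eq hs, Fintype.card_fin, mul_comm]
            push_cast
            rfl
          · rw [filter_forall_comp_eq_eq_empty hs, card_empty, Nat.cast_zero, mul_zero, mul_zero]
      _ = (m : ℝ) ^ (Fintype.card ι - #(T.image (g j₀))) * (1 / m) ^ (#T - #(T.image (g j₀))) := by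
          rw [hw.pr_fiberwiseConstOn_sub hg t]
      _ = (m : ℝ) ^ Fintype.card ι * (1 / m) ^ #T := by
          rw [pow_sub₀ _ hm (card_le_univ _), pow_sub₀ _ (one_div_ne_zero hm) card_image_le]
          field_simp
          rw [← mul_pow, mul_one_div_cancel hm, one_pow]
  have hcard : Fintype.card (κ → ι → Fin m) =
      m ^ Fintype.card ι * Fintype.card ({j // j ≠ j₀} → ι → Fin m) := by
    rw [Fintype.card_congr (Equiv.funSplitAt j₀ (ι → Fin m)), Fintype.card_prod, Fintype.card_fun,
      Fintype.card_fin]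
  simp_rw [card_filter_add_sum_eq T g j₀, Nat.cast_sum, mul_sum]
  rw [sum_comm, sum_congr rfl fun zr _ => hrow _, sum_const, card_univ, hcard, nsmul_eq_mul]
  push_cast
  ring

end HashCoordinate

section HashFamily

variable {U : Type*} [Fintype U] [DecidableEq U] {m ℓ d c : ℕ}

theorem sum_prod_weight_eq_one {wf : Fin d → (U → Fin m) → ℝ}
    (hwf : ∀ i, twoWiseIndep (wf i)) :
    ∑ f : Fin d → U → Fin m, ∏ i, wf i (f i) = 1 := by
  rw [← Fintype.prod_sum, Fintype.prod_eq_one _ fun i => (hwf i).2.1]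

open Classical in
theorem pr_hashWeight_eq_sum (wf : Fin d → (U → Fin m) → ℝ) (wg : Fin c → (U → Fin ℓ) → ℝ)
    (P : HashΩ U m ℓ d c → Prop) :
    Pr (hashWeight wf wg) P = ∑ g, (∏ j, wg j (g j)) *
      (∑ f, (∏ i, wf i (f i)) * #{z | P (f, g, z)}) /
        Fintype.card (Fin d → Fin c → Fin ℓ → Fin m) := by
  rw [Pr, sum_filter, Fintype.sum_prod_type, sum_comm, Fintype.sum_prod_type]
  refine sum_congr rfl fun g _ => ?_
  rw [sum_comm, mul_sum, sum_div]
  refine sum_congr rfl fun f _ => ?_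
  simp only [hashWeight]
  rw [← sum_filter, sum_const, nsmul_eq_mul]
  ring

variable [NeZero m]

theorem sum_prod_weight_mul_card_filter_hashFun_eq {wf : Fin d → (U → Fin m) → ℝ}
    (hwf : ∀ i, twoWiseIndep (wf i)) {T : Finset U} (g : Fin c → U → Fin ℓ) (j₀ : Fin c)
    (hg : #T ≤ #(T.image (g j₀)) + 1) (a : U → Fin d → Fin m) :
    ∑ f, (∏ i, wf i (f i)) *
        #{z : Fin d → Fin c → Fin ℓ → Fin m | ∀ x ∈ T, ∀ i, hashFun (f, g, z) i x = a x i} =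
      Fintype.card (Fin d → Fin c → Fin ℓ → Fin m) * (1 / m) ^ (d * #T) := by
  have hfilter (f : Fin d → U → Fin m) :
      ({z : Fin d → Fin c → Fin ℓ → Fin m | ∀ x ∈ T, ∀ i, hashFun (f, g, z) i x = a x i} :
        Finset _) =
        Fintype.piFinset fun i =>
          {zi : Fin c → Fin ℓ → Fin m | ∀ x ∈ T, f i x + ∑ j, zi j (g j x) = a x i} := by
    ext z
    simp only [mem_filter, mem_univ, true_and, Fintype.mem_piFinset, hashFun]
    exact ⟨fun h i x hx => h x hx i, fun h x hx i => h i x hx⟩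
  calc ∑ f, (∏ i, wf i (f i)) *
        #{z : Fin d → Fin c → Fin ℓ → Fin m | ∀ x ∈ T, ∀ i, hashFun (f, g, z) i x = a x i}
      = ∏ i, ∑ fi, wf i fi *
          #{zi : Fin c → Fin ℓ → Fin m | ∀ x ∈ T, fi x + ∑ j, zi j (g j x) = a x i} := by
        simp_rw [Fintype.prod_sum, hfilter, Fintype.card_piFinset, Nat.cast_prod, prod_mul_distrib]
    _ = Fintype.card (Fin d → Fin c → Fin ℓ → Fin m) * (1 / m) ^ (d * #T) := by
        simp_rw [fun i => (hwf i).sum_mul_card_filter_add_sum_eq g j₀ hg (fun x => a x i)]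
        rw [prod_const, card_univ]
        simp only [Fintype.card_fun, Fintype.card_fin]
        push_cast
        ring

end HashFamily

theorem hash_values_uniform_on_goodT_general
    {U : Type*} [Fintype U] [DecidableEq U] (m ℓ d c : ℕ) [NeZero m]
    (wf : Fin d → (U → Fin m) → ℝ) (wg : Fin c → (U → Fin ℓ) → ℝ)
    (hwf : ∀ i, twoWiseIndep (wf i))
    (T : Finset U) (a : U → Fin d → Fin m) :
    Pr (hashWeight wf wg) (fun ω => goodT T ω ∧ ∀ x ∈ T, ∀ i, hashFun ω i x = a x i) =
      Pr (hashWeight wf wg) (goodT T) * (1 / (m : ℝ)) ^ (d * T.card) := by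
  rw [pr_hashWeight_eq_sum, pr_hashWeight_eq_sum, sum_mul]
  refine sum_congr rfl fun g _ => ?_
  by_cases hg : ∃ j, #T ≤ #(T.image (g j)) + 1
  · obtain ⟨j₀, hj₀⟩ := hg
    have hgood (f : Fin d → U → Fin m) (z : Fin d → Fin c → Fin ℓ → Fin m) :
        goodT T (f, g, z) := ⟨j₀, hj₀⟩
    simp only [hgood, true_and, filter_true, card_univ]
    rw [sum_prod_weight_mul_card_filter_hashFun_eq hwf g j₀ hj₀ a, ← sum_mul,
      sum_prod_weight_eq_one hwf]
    ring
  · have hbad (f : Fin d → U → Fin m) (z : Fin d → Fin c → Fin ℓ → Fin m) :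
        ¬ goodT T (f, g, z) := hg
    simp [hbad]

/-- Conditioned on `good_T`, the hash values
`(h_1(x),…,h_d(x))_{x ∈ T}` are uniformly distributed on `([m]^d)^T`:
for every target `a` the probability of `good_T ∧ (h-values = a on T)` equals
`P(good_T) · m^{-d·|T|}`. -/
theorem hash_values_uniform_on_goodT
    {U : Type*} [Fintype U] [DecidableEq U] (m ℓ d c : ℕ) [NeZero m] [NeZero ℓ]
    (hd : 2 ≤ d) (hc : 1 ≤ c)
    (wf : Fin d → (U → Fin m) → ℝ) (wg : Fin c → (U → Fin ℓ) → ℝ)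
    (hwf : ∀ i, twoWiseIndep (wf i)) (hwg : ∀ j, twoUniversal (wg j))
    (T : Finset U) (a : U → Fin d → Fin m) :
    Pr (hashWeight wf wg) (fun ω => goodT T ω ∧ ∀ x ∈ T, ∀ i, hashFun ω i x = a x i) =
      Pr (hashWeight wf wg) (goodT T) * (1 / (m : ℝ)) ^ (d * T.card) :=
  hash_values_uniform_on_goodT_general m ℓ d c wf wg hwf T a
end

section
/- Every hypertree or unicyclic connected hypergraph with at least one edge contains an edge incident to a vertex of degree 1; consequently, iteratively removing edges incident to degree-1 vertices (the peeling process) empties such a component. -/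
/-!
Let the excess of a set `S` of edges be `∑_{e ∈ S} |e| - |⋃ S| - |S|`. Adding to `S` an edge that
meets `⋃ S` does not decrease the excess, so in a connected hypergraph every nonempty `S` has
excess at most that of the whole hypergraph, which is `≤ 0`. If no edge of `S` had a vertex of
degree one within `S`, double counting would give `∑ |e| ≥ 2 |⋃ S|`, and edges of size `≥ 3`
give `∑ |e| ≥ 3 |S|`, forcing a positive excess. Hence every nonempty subfamily has such an edge,
and removing one at a time peels the whole hypergraph.
-/

open Finset

def edgeConn {V E : Type*} [DecidableEq V] (mem : E → Finset V) (F : Finset E) : Prop :=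
  ∀ e ∈ F, ∀ e' ∈ F,
    Relation.ReflTransGen (fun a b => a ∈ F ∧ b ∈ F ∧ (mem a ∩ mem b).Nonempty) e e'

theorem Relation.ReflTransGen.exists_boundary_rel {α : Type*} {r : α → α → Prop} {p : α → Prop}
    {a b : α} (h : Relation.ReflTransGen r a b) (ha : p a) (hb : ¬ p b) :
    ∃ x y, p x ∧ ¬ p y ∧ r x y := by
  induction h with
  | refl => exact absurd ha hb
  | @tail c d _ hcd ih =>
    by_cases hc : p c
    · exact ⟨c, d, hc, hb, hcd⟩
    · exact ih hc

section Hypergraph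

variable {V E : Type*} [DecidableEq V] (mem : E → Finset V)

/-- For `S` whose bipartite representation is connected, this is its cyclomatic number minus one:
`-1` for hypertrees and `0` for unicyclic hypergraphs. -/
def incidenceExcess (S : Finset E) : ℤ :=
  ((∑ e ∈ S, (mem e).card : ℕ) : ℤ) - (S.biUnion mem).card - S.card

theorem sum_card_eq_sum_card_filter_mem (S : Finset E) :
    ∑ e ∈ S, (mem e).card = ∑ v ∈ S.biUnion mem, #{e ∈ S | v ∈ mem e} := by
  have hbelow (e) (he : e ∈ S) : (S.biUnion mem).bipartiteBelow (· ∈ mem ·) e = mem e := by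
    rw [bipartiteBelow, filter_mem_eq_inter, inter_eq_right]
    exact subset_biUnion_of_mem mem he
  rw [← sum_congr rfl fun e he ↦ congrArg card (hbelow e he)]
  exact (sum_card_bipartiteAbove_eq_sum_card_bipartiteBelow _).symm

theorem exists_private_vertex_of_incidenceExcess_nonpos {S : Finset E} (hS : S.Nonempty)
    (hsize : ∀ e ∈ S, 3 ≤ (mem e).card) (hexcess : incidenceExcess mem S ≤ 0) :
    ∃ e ∈ S, ∃ v ∈ mem e, ∀ e' ∈ S, e' ≠ e → v ∉ mem e' := by
  by_contra! hshared
  have hdegree (v) (hv : v ∈ S.biUnion mem) : 2 ≤ #{e ∈ S | v ∈ mem e} := by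
    obtain ⟨e, he, hve⟩ := mem_biUnion.mp hv
    obtain ⟨e', he', hne, hve'⟩ := hshared e he v hve
    exact one_lt_card.mpr ⟨e, by simp [he, hve], e', by simp [he', hve'], hne.symm⟩
  have hvertices : 2 * #(S.biUnion mem) ≤ ∑ e ∈ S, (mem e).card := by
    rw [sum_card_eq_sum_card_filter_mem, mul_comm, ← smul_eq_mul, ← sum_const]
    exact sum_le_sum hdegree
  have hedges : 3 * #S ≤ ∑ e ∈ S, (mem e).card := by
    rw [mul_comm, ← smul_eq_mul, ← sum_const]
    exact sum_le_sum hsize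
  have := hS.card_pos
  unfold incidenceExcess at hexcess
  omega

variable [DecidableEq E]

theorem incidenceExcess_le_insert {S : Finset E} {b : E} (hb : b ∉ S)
    (hmeet : (mem b ∩ S.biUnion mem).Nonempty) :
    incidenceExcess mem S ≤ incidenceExcess mem (insert b S) := by
  have hunion := card_union_add_card_inter (mem b) (S.biUnion mem)
  have := hmeet.card_pos
  simp only [incidenceExcess, sum_insert hb, biUnion_insert, card_insert_of_notMem hb]
  omega

variable [Fintype E]

theorem exists_edge_meeting_of_edgeConn (hconn : edgeConn mem univ) {S : Finset E}
    (hS : S.Nonempty) (hSu : S ≠ univ) :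
    ∃ b ∉ S, (mem b ∩ S.biUnion mem).Nonempty := by
  obtain ⟨a, ha⟩ := hS
  obtain ⟨c, hc⟩ : ∃ c, c ∉ S := by
    by_contra! h
    exact hSu (eq_univ_iff_forall.mpr h)
  obtain ⟨x, y, hx, hy, -, -, v, hv⟩ :=
    (hconn a (mem_univ a) c (mem_univ c)).exists_boundary_rel ha hc
  rw [mem_inter] at hv
  exact ⟨y, hy, v, mem_inter.mpr ⟨hv.2, mem_biUnion.mpr ⟨x, hx, hv.1⟩⟩⟩

theorem incidenceExcess_le_univ (hconn : edgeConn mem univ) {S : Finset E}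
    (hS : S.Nonempty) : incidenceExcess mem S ≤ incidenceExcess mem univ := by
  revert hS
  refine strongDownwardInductionOn S (n := Fintype.card E) (fun T ih _ hT ↦ ?_) (card_le_univ S)
  by_cases hTu : T = univ
  · rw [hTu]
  obtain ⟨b, hb, hmeet⟩ := exists_edge_meeting_of_edgeConn mem hconn hT hTu
  exact (incidenceExcess_le_insert mem hb hmeet).trans
    (ih (card_le_univ _) (ssubset_insert hb) (insert_nonempty b T))

end Hypergraph

section Peeling

variable {V E : Type*} [DecidableEq E] (mem : E → Finset V)

theorem exists_peeling_list
    (hleaf : ∀ S : Finset E, S.Nonempty → ∃ e ∈ S, ∃ v ∈ mem e, ∀ e' ∈ S, e' ≠ e → v ∉ mem e')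
    (S : Finset E) :
    ∃ L : List E, L.Nodup ∧ L.toFinset = S ∧ ∀ i (hi : i < L.length),
      ∃ v ∈ mem L[i], ∀ j (hj : j < L.length), i < j → v ∉ mem L[j] := by
  induction S using strongInduction with
  | H S ih =>
  rcases S.eq_empty_or_nonempty with rfl | hS
  · exact ⟨[], List.nodup_nil, rfl, fun i hi ↦ absurd hi (Nat.not_lt_zero _)⟩
  obtain ⟨e, he, v, hv, hprivate⟩ := hleaf S hS
  obtain ⟨L, hnd, hL, hpeel⟩ := ih (S.erase e) (erase_ssubset he)
  have heL : e ∉ L := by simp [← List.mem_toFinset, hL]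
  refine ⟨e :: L, hnd.cons heL, by rw [List.toFinset_cons, hL, insert_erase he], ?_⟩
  rintro (_ | i) hi
  · refine ⟨v, hv, ?_⟩
    rintro (_ | j) hj hij
    · exact absurd hij (lt_irrefl 0)
    have hmem : L[j]'(by simpa using hj) ∈ S.erase e :=
      hL ▸ List.mem_toFinset.mpr (List.getElem_mem _)
    simpa using hprivate _ (mem_of_mem_erase hmem) (ne_of_mem_erase hmem)
  · obtain ⟨w, hw, hw'⟩ := hpeel i (by simpa using hi)
    refine ⟨w, hw, ?_⟩
    rintro (_ | j) hj hij
    · omega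
    simpa using hw' j (by simpa using hj) (by omega)

theorem exists_peeling_order [Fintype E]
    (hleaf : ∀ S : Finset E, S.Nonempty → ∃ e ∈ S, ∃ v ∈ mem e, ∀ e' ∈ S, e' ≠ e → v ∉ mem e') :
    ∃ ord : Fin (Fintype.card E) ≃ E, ∀ j, ∃ v ∈ mem (ord j), ∀ k, j < k → v ∉ mem (ord k) := by
  obtain ⟨L, hnd, hL, hpeel⟩ := exists_peeling_list mem hleaf univ
  have hall (e) : e ∈ L := List.mem_toFinset.mp (hL ▸ mem_univ e)
  have hlen : L.length = Fintype.card E := by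
    rw [← List.toFinset_card_of_nodup hnd, hL, card_univ]
  refine ⟨(finCongr hlen.symm).trans (hnd.getEquivOfForallMemList L hall), fun j ↦ ?_⟩
  obtain ⟨v, hv, hv'⟩ := hpeel j (j.isLt.trans_eq hlen.symm)
  exact ⟨v, hv, fun k hjk ↦ hv' k (k.isLt.trans_eq hlen.symm) hjk⟩

end Peeling

theorem hypertree_or_unicyclic_peeling_general
    {V E : Type*} [Fintype E] [DecidableEq V] [DecidableEq E]
    (mem : E → Finset V) (hne : Nonempty E)
    (hsize : ∀ e, 3 ≤ (mem e).card)
    (hconn : edgeConn mem (Finset.univ : Finset E))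
    (huni : ∑ e : E, (mem e).card ≤
      ((Finset.univ : Finset E).biUnion mem).card + Fintype.card E) :
    (∃ e : E, ∃ v ∈ mem e, ∀ e' : E, e' ≠ e → v ∉ mem e') ∧
    ∃ ord : Fin (Fintype.card E) ≃ E, ∀ j : Fin (Fintype.card E),
      ∃ v ∈ mem (ord j), ∀ k : Fin (Fintype.card E), j < k → v ∉ mem (ord k) := by
  have hexcess : incidenceExcess mem univ ≤ 0 := by
    rw [incidenceExcess, card_univ]
    omega
  have hleaf (S : Finset E) (hS : S.Nonempty) :
      ∃ e ∈ S, ∃ v ∈ mem e, ∀ e' ∈ S, e' ≠ e → v ∉ mem e' :=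
    exists_private_vertex_of_incidenceExcess_nonpos mem hS (fun e _ ↦ hsize e)
      ((incidenceExcess_le_univ mem hconn hS).trans hexcess)
  refine ⟨?_, exists_peeling_order mem hleaf⟩
  obtain ⟨e, -, v, hv, hprivate⟩ := hleaf univ univ_nonempty
  exact ⟨e, v, hv, fun e' he' ↦ hprivate e' (mem_univ e') he'⟩

/-- A connected hypergraph (with edges of size ≥ 3, as in the
paper's `d`-uniform setting with `d ≥ 3`) that is a hypertree or unicyclic —
i.e. its bipartite representation has at most as many edges (`∑_e |e|`) as
vertices (`|⋃E| + |E|`, cyclomatic number ≤ 1) — and has at least one edge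
contains an edge incident to a vertex of degree 1; consequently the peeling
process (repeatedly removing an edge incident to a degree-1 vertex) empties it:
the edges can be ordered so that each edge has a vertex in no later edge. -/
theorem hypertree_or_unicyclic_peeling
    {V E : Type*} [Fintype V] [Fintype E] [DecidableEq V] [DecidableEq E]
    (mem : E → Finset V) (hne : Nonempty E)
    (hsize : ∀ e, 3 ≤ (mem e).card)
    (hconn : edgeConn mem (Finset.univ : Finset E))
    (huni : ∑ e : E, (mem e).card ≤
      ((Finset.univ : Finset E).biUnion mem).card + Fintype.card E) :
    (∃ e : E, ∃ v ∈ mem e, ∀ e' : E, e' ≠ e → v ∉ mem e') ∧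
    ∃ ord : Fin (Fintype.card E) ≃ E, ∀ j : Fin (Fintype.card E),
      ∃ v ∈ mem (ord j), ∀ k : Fin (Fintype.card E), j < k → v ∉ mem (ord k) :=
  hypertree_or_unicyclic_peeling_general mem hne hsize hconn huni
end

section
/- If a graph G = (V,E) contains no (k', t)-multicycle for any k' > k, then for every vertex v, letting H be the subgraph induced by all vertices at distance at most t from v, one can remove at most 2k edges incident to v from H so that the connected component of v in the resulting graph is a tree. -/
open SimpleGraph

/-- `G` has a `(k,t)`-multicycle at `s`: a connected subgraph `G'` containing
`s` with cyclomatic number exactly `k`, together with a spanning shortest-path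
tree `T'` of `G'` rooted at `s` of depth at most `t`, all of whose leaves are
incident to a non-tree edge of `G'`. -/
def HasMulticycle {V : Type*} (G : SimpleGraph V) (k t : ℕ) (s : V) : Prop :=
  ∃ (G' T' : G.Subgraph) (hs : s ∈ G'.verts) (hs' : s ∈ T'.verts),
    T' ≤ G' ∧
    T'.verts = G'.verts ∧
    G'.verts.Finite ∧
    G'.coe.Connected ∧
    T'.coe.IsTree ∧
    -- cyclomatic number of `G'` is exactly `k`
    G'.edgeSet.ncard + 1 = G'.verts.ncard + k ∧
    -- `T'` is a shortest-path tree of depth at most `t`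
    (∀ (w : V) (hw : w ∈ G'.verts) (hw' : w ∈ T'.verts),
      T'.coe.dist ⟨s, hs'⟩ ⟨w, hw'⟩ = G'.coe.dist ⟨s, hs⟩ ⟨w, hw⟩ ∧
      T'.coe.dist ⟨s, hs'⟩ ⟨w, hw'⟩ ≤ t) ∧
    -- every leaf of `T'` is incident to an edge of `G'` not in `T'`
    ∀ w ∈ T'.verts, w ≠ s → (T'.neighborSet w).ncard = 1 →
      ∃ v : V, G'.Adj w v ∧ ¬ T'.Adj w v

/-- The subgraph of `G` induced by all vertices at distance at most `t`
from `v`. -/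
def ballGraph {V : Type*} (G : SimpleGraph V) (v : V) (t : ℕ) : SimpleGraph V where
  Adj a b := G.Adj a b ∧
    (G.Reachable v a ∧ G.dist v a ≤ t) ∧ (G.Reachable v b ∧ G.dist v b ≤ t)
  symm := by
    constructor
    intro a b h
    exact ⟨h.1.symm, h.2.2, h.2.1⟩
  loopless := by
    constructor
    intro a h
    exact G.loopless.irrefl a h.1

/-!
Fix a breadth-first-search tree of the component of `v` and call an edge of the ball graph a
non-tree edge if it is not a tree edge. For any nonempty set `F` of non-tree edges, the tree paths
from `v` to the endpoints of `F` form a shortest-path tree of depth at most `t` whose leaves are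
endpoints of `F`; adding `F` to it gives a `(|F|, t)`-multicycle at `v`. Hence the ball has at
most `k` non-tree edges. For every endpoint `x` of a non-tree edge, delete the tree edge at `v`
leading towards `x` (or the non-tree edge itself when `x = v`). Walking from `v` in what remains
never leaves the branches whose edge at `v` survives, and no non-tree edge is incident to those
branches, so the component of `v` uses tree edges only and is acyclic.
-/

lemma Set.exists_finset_coe_eq_card_le {α : Type*} {s : Set α} {k : ℕ}
    (h : ∀ F : Finset α, ↑F ⊆ s → F.card ≤ k) : ∃ N : Finset α, ↑N = s ∧ N.card ≤ k := by
  by_cases hs : s.Finite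
  · exact ⟨hs.toFinset, hs.coe_toFinset, h _ hs.coe_toFinset.subset⟩
  · obtain ⟨u, hus, hufin, hucard⟩ := Set.Infinite.exists_subset_ncard_eq hs (k + 1)
    have := h hufin.toFinset (by simpa using hus)
    rw [← Set.ncard_eq_toFinset_card u hufin] at this
    omega

theorem Sym2.card_biUnion_image_toFinset_le {α β : Type*} [DecidableEq α] [DecidableEq β]
    (N : Finset (Sym2 α)) (f : Sym2 α → α → β) :
    (N.biUnion fun e => e.toFinset.image (f e)).card ≤ 2 * N.card := by
  refine Finset.card_biUnion_le.trans ?_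
  rw [mul_comm, ← smul_eq_mul]
  refine Finset.sum_le_card_nsmul _ _ _ fun e _ => Finset.card_image_le.trans ?_
  rw [Sym2.card_toFinset]
  split <;> omega

namespace SimpleGraph

variable {V : Type*}

theorem isAcyclic_of_forall_adj_le_eq {α : Type*} [LinearOrder α] {H : SimpleGraph V}
    (r : V → α) (p : V → V) (h : ∀ ⦃u w⦄, H.Adj u w → r w ≤ r u → w = p u) :
    H.IsAcyclic := by
  classical
  intro x c hc
  obtain ⟨u, hu, hmax⟩ := c.support.toFinset.exists_max_image r ⟨x, by simp⟩
  have hu : u ∈ c.support := List.mem_toFinset.mp hu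
  set c' := c.rotate u hu
  have hc' : c'.IsCycle := hc.rotate hu
  have hle : ∀ i, r (c'.getVert i) ≤ r u := fun i =>
    hmax _ <| List.mem_toFinset.mpr <|
      (c.mem_support_rotate_iff u hu).mp (c'.getVert_mem_support i)
  have hsnd := h (c'.adj_snd hc'.not_nil) (hle 1)
  have hpen := h (c'.adj_penultimate hc'.not_nil).symm (hle _)
  exact hc'.snd_ne_penultimate (hsnd.trans hpen.symm)

lemma Subgraph.ncard_edgeSet_add_one_of_isTree {G : SimpleGraph V} {H : G.Subgraph}
    (hfin : H.verts.Finite) (hT : H.coe.IsTree) : H.edgeSet.ncard + 1 = H.verts.ncard := by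
  have : Finite H.verts := hfin
  have hcard := (isTree_iff_connected_and_card.mp hT).2
  rwa [← H.image_coe_edgeSet_coe, (Sym2.map.injective Subtype.val_injective).injOn.ncard_image,
    ← Nat.card_coe_set_eq, ← Nat.card_coe_set_eq]

theorem Subgraph.dist_coe_eq_of_walk {G : SimpleGraph V} {H : G.Subgraph} {a b : H.verts}
    (q : H.coe.Walk a b) (hq : q.length = G.dist a b) : H.coe.dist a b = G.dist a b := by
  obtain ⟨q', hq'⟩ := q.reachable.exists_walk_length_eq_dist
  refine le_antisymm (hq ▸ dist_le q) ?_
  have := dist_le (q'.map H.hom)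
  rwa [Walk.length_map, hq'] at this

section BFS

variable {G : SimpleGraph V} {v u : V}

theorem Reachable.exists_adj_dist_add_one (hr : G.Reachable v u) (hne : u ≠ v) :
    ∃ p, G.Adj p u ∧ G.dist v p + 1 = G.dist v u := by
  obtain ⟨q, hq⟩ := hr.exists_walk_length_eq_dist
  have hnil : ¬ q.Nil := fun h => hne h.eq.symm
  have hadj := q.adj_penultimate hnil
  have h1 : G.dist v q.penultimate ≤ G.dist v u - 1 := by
    simpa [Walk.dropLast, Walk.take_length, hq] using dist_le q.dropLast
  have h2 : G.dist v u ≤ G.dist v q.penultimate + 1 := by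
    simpa [dist_eq_one_iff_adj.mpr hadj] using hadj.reachable.dist_triangle_right v
  have h3 : 0 < G.dist v u := hr.pos_dist_of_ne hne.symm
  exact ⟨q.penultimate, hadj, by omega⟩

open Classical in
/-- The parent of `u` in a breadth-first-search tree of the component of `v`; junk value `v`
at `v` itself and outside the component. -/
noncomputable def bfsParent (G : SimpleGraph V) (v u : V) : V :=
  if h : G.Reachable v u ∧ u ≠ v then (h.1.exists_adj_dist_add_one h.2).choose else v

theorem adj_bfsParent (hr : G.Reachable v u) (hne : u ≠ v) : G.Adj (G.bfsParent v u) u := by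
  rw [bfsParent, dif_pos ⟨hr, hne⟩]
  exact (hr.exists_adj_dist_add_one hne).choose_spec.1

theorem dist_bfsParent_add_one (hr : G.Reachable v u) (hne : u ≠ v) :
    G.dist v (G.bfsParent v u) + 1 = G.dist v u := by
  rw [bfsParent, dif_pos ⟨hr, hne⟩]
  exact (hr.exists_adj_dist_add_one hne).choose_spec.2

@[simp]
theorem bfsParent_self : G.bfsParent v v = v := by
  simp [bfsParent]

theorem reachable_bfsParent (hr : G.Reachable v u) : G.Reachable v (G.bfsParent v u) := by
  by_cases hne : u = v
  · simp [hne]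
  · exact hr.trans (adj_bfsParent hr hne).symm.reachable

theorem dist_bfsParent (hr : G.Reachable v u) :
    G.dist v (G.bfsParent v u) = G.dist v u - 1 := by
  by_cases hne : u = v
  · simp [hne]
  · have := dist_bfsParent_add_one hr hne
    omega

theorem reachable_bfsParent_iterate (hr : G.Reachable v u) (j : ℕ) :
    G.Reachable v ((G.bfsParent v)^[j] u) := by
  induction j with
  | zero => exact hr
  | succ j ih => simpa [Function.iterate_succ_apply'] using reachable_bfsParent ih

theorem dist_bfsParent_iterate (hr : G.Reachable v u) (j : ℕ) :
    G.dist v ((G.bfsParent v)^[j] u) = G.dist v u - j := by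
  induction j with
  | zero => rfl
  | succ j ih =>
    rw [Function.iterate_succ_apply', dist_bfsParent (reachable_bfsParent_iterate hr j), ih]
    omega

theorem bfsParent_iterate_dist (hr : G.Reachable v u) :
    (G.bfsParent v)^[G.dist v u] u = v := by
  have h := dist_bfsParent_iterate hr (G.dist v u)
  rw [Nat.sub_self, (reachable_bfsParent_iterate hr _).dist_eq_zero_iff] at h
  exact h.symm

theorem bfsParent_iterate_of_dist_le (hr : G.Reachable v u) {j : ℕ} (hj : G.dist v u ≤ j) :
    (G.bfsParent v)^[j] u = v := by
  rw [← Nat.sub_add_cancel hj, Function.iterate_add_apply, bfsParent_iterate_dist hr,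
    Function.iterate_fixed bfsParent_self]

/-- The first vertex after `v` on the tree path from `v` to `u`. -/
noncomputable def bfsBranch (G : SimpleGraph V) (v u : V) : V :=
  (G.bfsParent v)^[G.dist v u - 1] u

theorem bfsBranch_of_dist_eq_one (h : G.dist v u = 1) : G.bfsBranch v u = u := by
  simp [bfsBranch, h]

theorem bfsBranch_bfsParent (h : 2 ≤ G.dist v u) :
    G.bfsBranch v (G.bfsParent v u) = G.bfsBranch v u := by
  have hr := Reachable.of_dist_ne_zero (by omega : G.dist v u ≠ 0)
  rw [bfsBranch, bfsBranch, dist_bfsParent hr, ← Function.iterate_succ_apply]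
  congr 1
  omega

theorem dist_bfsBranch (hr : G.Reachable v u) (hne : u ≠ v) : G.dist v (G.bfsBranch v u) = 1 := by
  have := hr.pos_dist_of_ne hne.symm
  rw [bfsBranch, dist_bfsParent_iterate hr]
  omega

def bfsTree (G : SimpleGraph V) (v : V) : SimpleGraph V :=
  fromRel fun a b => G.Reachable v b ∧ a = G.bfsParent v b

theorem bfsTree_adj_bfsParent (hr : G.Reachable v u) (hne : u ≠ v) :
    (G.bfsTree v).Adj (G.bfsParent v u) u := by
  refine (fromRel_adj _ _ _).mpr ⟨fun h => ?_, Or.inl ⟨hr, rfl⟩⟩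
  have := dist_bfsParent_add_one hr hne
  rw [h] at this
  omega

theorem eq_bfsParent_of_bfsTree_adj {a b : V} (h : (G.bfsTree v).Adj a b)
    (hd : G.dist v b ≤ G.dist v a) :
    G.Reachable v a ∧ a ≠ v ∧ b = G.bfsParent v a := by
  obtain ⟨hab, ⟨hr, rfl⟩ | ⟨hr, rfl⟩⟩ := (fromRel_adj _ _ _).mp h
  · have hbv : b ≠ v := by
      rintro rfl
      exact hab bfsParent_self
    have := dist_bfsParent_add_one hr hbv
    omega
  · refine ⟨hr, ?_, rfl⟩
    rintro rfl
    exact hab bfsParent_self.symm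

theorem bfsTree_le (G : SimpleGraph V) (v : V) : G.bfsTree v ≤ G := by
  intro a b h
  rcases le_total (G.dist v b) (G.dist v a) with hd | hd
  · obtain ⟨hr, hne, rfl⟩ := eq_bfsParent_of_bfsTree_adj h hd
    exact (adj_bfsParent hr hne).symm
  · obtain ⟨hr, hne, rfl⟩ := eq_bfsParent_of_bfsTree_adj h.symm hd
    exact adj_bfsParent hr hne

theorem isAcyclic_bfsTree (G : SimpleGraph V) (v : V) : (G.bfsTree v).IsAcyclic :=
  isAcyclic_of_forall_adj_le_eq (G.dist v) (G.bfsParent v) fun _ _ h hd =>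
    (eq_bfsParent_of_bfsTree_adj h hd).2.2

theorem bfsBranch_eq_of_bfsTree_adj {a b : V} (h : (G.bfsTree v).Adj a b) (ha : a ≠ v)
    (hb : b ≠ v) : G.bfsBranch v a = G.bfsBranch v b := by
  wlog hd : G.dist v b ≤ G.dist v a generalizing a b
  · exact (this h.symm hb ha (by omega)).symm
  obtain ⟨hr, -, rfl⟩ := eq_bfsParent_of_bfsTree_adj h hd
  have := (reachable_bfsParent hr).pos_dist_of_ne hb.symm
  have := dist_bfsParent_add_one hr ha
  exact (bfsBranch_bfsParent (by omega)).symm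

theorem bfsBranch_of_bfsTree_adj {b : V} (h : (G.bfsTree v).Adj v b) : G.bfsBranch v b = b := by
  obtain ⟨hr, hne, hpar⟩ := eq_bfsParent_of_bfsTree_adj h.symm (by simp)
  have := dist_bfsParent_add_one hr hne
  rw [← hpar, dist_self] at this
  exact bfsBranch_of_dist_eq_one this.symm

end BFS

section Multicycle

variable {G : SimpleGraph V} {v u : V} {t : ℕ}

def closedBall (G : SimpleGraph V) (v : V) (t : ℕ) : Set V :=
  {u | G.Reachable v u ∧ G.dist v u ≤ t}

theorem ballGraph_adj {a b : V} :
    (ballGraph G v t).Adj a b ↔ G.Adj a b ∧ a ∈ G.closedBall v t ∧ b ∈ G.closedBall v t :=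
  Iff.rfl

theorem mem_closedBall_of_mem_edgeSet {e : Sym2 V} (he : e ∈ (ballGraph G v t).edgeSet) {x : V}
    (hx : x ∈ e) : x ∈ G.closedBall v t := by
  induction e using Sym2.ind with
  | _ a b =>
    rcases Sym2.mem_iff.mp hx with rfl | rfl
    exacts [(ballGraph_adj.mp he).2.1, (ballGraph_adj.mp he).2.2]

theorem bfsParent_iterate_mem_closedBall (hu : u ∈ G.closedBall v t) (j : ℕ) :
    (G.bfsParent v)^[j] u ∈ G.closedBall v t :=
  ⟨reachable_bfsParent_iterate hu.1 j,
    (dist_bfsParent_iterate hu.1 j).trans_le ((Nat.sub_le _ _).trans hu.2)⟩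

def nonTreeEdges (G : SimpleGraph V) (v : V) (t : ℕ) : Set (Sym2 V) :=
  (ballGraph G v t).edgeSet \ (G.bfsTree v).edgeSet

def bfsHull (G : SimpleGraph V) (v : V) (F : Finset (Sym2 V)) : Set V :=
  {u | ∃ e ∈ F, ∃ x ∈ e, ∃ j, (G.bfsParent v)^[j] x = u}

def bfsHullTree (G : SimpleGraph V) (v : V) (F : Finset (Sym2 V)) : G.Subgraph :=
  (toSubgraph (G.bfsTree v) (G.bfsTree_le v)).induce (G.bfsHull v F)

def bfsHullGraph (G : SimpleGraph V) (v : V) (F : Finset (Sym2 V)) : G.Subgraph :=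
  (toSubgraph (G.bfsTree v ⊔ (fromEdgeSet ↑F ⊓ G))
    (sup_le (G.bfsTree_le v) inf_le_right)).induce (G.bfsHull v F)

variable {F : Finset (Sym2 V)}

theorem bfsHullTree_le_bfsHullGraph : G.bfsHullTree v F ≤ G.bfsHullGraph v F :=
  ⟨subset_rfl, fun _ _ h => ⟨h.1, h.2.1, Or.inl h.2.2⟩⟩

theorem mem_bfsHull_of_mem {e : Sym2 V} (he : e ∈ F) {x : V} (hx : x ∈ e) :
    x ∈ G.bfsHull v F :=
  ⟨e, he, x, hx, 0, rfl⟩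

theorem bfsParent_mem_bfsHull (hu : u ∈ G.bfsHull v F) : G.bfsParent v u ∈ G.bfsHull v F := by
  obtain ⟨e, he, x, hx, j, rfl⟩ := hu
  exact ⟨e, he, x, hx, j + 1, Function.iterate_succ_apply' _ _ _⟩

theorem bfsHull_subset_closedBall (hF : ↑F ⊆ G.nonTreeEdges v t) :
    G.bfsHull v F ⊆ G.closedBall v t := by
  rintro _ ⟨e, he, x, hx, j, rfl⟩
  exact bfsParent_iterate_mem_closedBall (mem_closedBall_of_mem_edgeSet (hF he).1 hx) j

theorem root_mem_bfsHull (hF : ↑F ⊆ G.nonTreeEdges v t) (hne : F.Nonempty) :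
    v ∈ G.bfsHull v F := by
  obtain ⟨e, he⟩ := hne
  exact ⟨e, he, _, e.out_fst_mem, _,
    bfsParent_iterate_dist (mem_closedBall_of_mem_edgeSet (hF he).1 e.out_fst_mem).1⟩

theorem bfsHull_finite (hF : ↑F ⊆ G.nonTreeEdges v t) : (G.bfsHull v F).Finite := by
  classical
  refine (F.finite_toSet.biUnion fun e _ => e.toFinset.finite_toSet.biUnion fun x _ =>
    (Set.finite_Iic (G.dist v x)).image fun j => (G.bfsParent v)^[j] x).subset ?_
  rintro _ ⟨e, he, x, hx, j, rfl⟩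
  have hr := (mem_closedBall_of_mem_edgeSet (hF he).1 hx).1
  simp only [Set.mem_iUnion, Set.mem_image, Set.mem_Iic]
  refine ⟨e, he, x, Sym2.mem_toFinset.mpr hx, min j (G.dist v x), min_le_right _ _, ?_⟩
  rcases le_total j (G.dist v x) with h | h
  · rw [min_eq_left h]
  · rw [min_eq_right h, bfsParent_iterate_dist hr, bfsParent_iterate_of_dist_le hr h]

theorem isAcyclic_bfsHullTree : (G.bfsHullTree v F).coe.IsAcyclic :=
  IsAcyclic.comap ⟨Subtype.val, fun h => h.2.2⟩ Subtype.val_injective (G.isAcyclic_bfsTree v)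

theorem exists_walk_bfsHullTree (hF : ↑F ⊆ G.nonTreeEdges v t)
    (hv : v ∈ (G.bfsHullTree v F).verts) (hu : u ∈ (G.bfsHullTree v F).verts) :
    ∃ q : (G.bfsHullTree v F).coe.Walk ⟨v, hv⟩ ⟨u, hu⟩, q.length = G.dist v u := by
  have hr := (bfsHull_subset_closedBall hF hu).1
  induction hd : G.dist v u generalizing u with
  | zero =>
    obtain rfl := (hr.dist_eq_zero_iff.mp hd)
    exact ⟨Walk.nil, rfl⟩
  | succ n ih =>
    have hne : u ≠ v := by
      rintro rfl
      simp at hd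
    have hp : G.bfsParent v u ∈ (G.bfsHullTree v F).verts := bfsParent_mem_bfsHull hu
    obtain ⟨q, hq⟩ := ih hp (reachable_bfsParent hr)
      (by have := dist_bfsParent_add_one hr hne; omega)
    exact ⟨q.concat ⟨hp, hu, bfsTree_adj_bfsParent hr hne⟩,
      (Walk.length_concat _ _).trans (congrArg (· + 1) hq)⟩

theorem isTree_bfsHullTree (hF : ↑F ⊆ G.nonTreeEdges v t) (hne : F.Nonempty) :
    (G.bfsHullTree v F).coe.IsTree := by
  have hv := root_mem_bfsHull hF hne
  refine ⟨(connected_iff _).mpr ⟨fun a b => ?_, ⟨⟨v, hv⟩⟩⟩, isAcyclic_bfsHullTree⟩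
  obtain ⟨qa, -⟩ := exists_walk_bfsHullTree hF hv a.2
  obtain ⟨qb, -⟩ := exists_walk_bfsHullTree hF hv b.2
  exact qa.reachable.symm.trans qb.reachable

theorem connected_bfsHullGraph (hF : ↑F ⊆ G.nonTreeEdges v t) (hne : F.Nonempty) :
    (G.bfsHullGraph v F).coe.Connected :=
  Subgraph.connected_iff'.mp <| (Subgraph.connected_iff'.mpr (isTree_bfsHullTree hF hne).1).mono
    bfsHullTree_le_bfsHullGraph rfl

theorem dist_bfsHullTree (hF : ↑F ⊆ G.nonTreeEdges v t) (hv : v ∈ (G.bfsHullTree v F).verts)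
    {w : V} (hw : w ∈ (G.bfsHullTree v F).verts) :
    (G.bfsHullTree v F).coe.dist ⟨v, hv⟩ ⟨w, hw⟩ = G.dist v w := by
  obtain ⟨q, hq⟩ := exists_walk_bfsHullTree hF hv hw
  exact Subgraph.dist_coe_eq_of_walk q hq

theorem dist_bfsHullGraph (hF : ↑F ⊆ G.nonTreeEdges v t) (hv : v ∈ (G.bfsHullGraph v F).verts)
    {w : V} (hw : w ∈ (G.bfsHullGraph v F).verts) :
    (G.bfsHullGraph v F).coe.dist ⟨v, hv⟩ ⟨w, hw⟩ = G.dist v w := by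
  obtain ⟨q, hq⟩ := exists_walk_bfsHullTree hF hv hw
  exact Subgraph.dist_coe_eq_of_walk (q.map (Subgraph.inclusion bfsHullTree_le_bfsHullGraph))
    ((Walk.length_map _ _).trans hq)

theorem bfsHullGraph_edgeSet (hF : ↑F ⊆ G.nonTreeEdges v t) :
    (G.bfsHullGraph v F).edgeSet = (G.bfsHullTree v F).edgeSet ∪ ↑F := by
  ext e
  induction e using Sym2.ind with
  | _ a b =>
    simp only [Set.mem_union, Subgraph.mem_edgeSet, Finset.mem_coe]
    constructor
    · rintro ⟨ha, hb, htree | ⟨hab, -⟩⟩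
      · exact Or.inl ⟨ha, hb, htree⟩
      · exact Or.inr ((fromEdgeSet_adj _).mp hab).1
    · rintro (h | h)
      · exact ⟨h.1, h.2.1, Or.inl h.2.2⟩
      · have hG : G.Adj a b := (hF h).1.1
        exact ⟨mem_bfsHull_of_mem h (Sym2.mem_mk_left a b),
          mem_bfsHull_of_mem h (Sym2.mem_mk_right a b),
          Or.inr ⟨(fromEdgeSet_adj _).mpr ⟨h, hG.ne⟩, hG⟩⟩

theorem disjoint_edgeSet_bfsHullTree (hF : ↑F ⊆ G.nonTreeEdges v t) :
    Disjoint (G.bfsHullTree v F).edgeSet ↑F := by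
  refine Set.disjoint_left.mpr fun e he heF => ?_
  induction e using Sym2.ind with
  | _ a b => exact (hF heF).2 he.2.2

theorem ncard_edgeSet_bfsHullGraph (hF : ↑F ⊆ G.nonTreeEdges v t) (hne : F.Nonempty) :
    (G.bfsHullGraph v F).edgeSet.ncard + 1 = (G.bfsHullGraph v F).verts.ncard + F.card := by
  have hfin := bfsHull_finite hF
  have hTfin : (G.bfsHullTree v F).edgeSet.Finite := by
    have : Finite (G.bfsHullTree v F).verts := hfin
    rw [← Subgraph.image_coe_edgeSet_coe]
    exact (Set.toFinite _).image _
  have hT := Subgraph.ncard_edgeSet_add_one_of_isTree hfin (isTree_bfsHullTree hF hne)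
  rw [bfsHullGraph_edgeSet hF, Set.ncard_union_eq (disjoint_edgeSet_bfsHullTree hF) hTfin,
    Set.ncard_coe_finset]
  change _ = (G.bfsHullTree v F).verts.ncard + F.card
  omega

theorem one_lt_ncard_neighborSet_bfsParent (hF : ↑F ⊆ G.nonTreeEdges v t)
    (hu : u ∈ (G.bfsHullTree v F).verts) (hpu : G.bfsParent v u ≠ v) :
    1 < ((G.bfsHullTree v F).neighborSet (G.bfsParent v u)).ncard := by
  have hr := (bfsHull_subset_closedBall hF hu).1
  have huv : u ≠ v := by
    rintro rfl
    exact hpu bfsParent_self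
  have hp : G.bfsParent v u ∈ (G.bfsHullTree v F).verts := bfsParent_mem_bfsHull hu
  have hd := dist_bfsParent_add_one hr huv
  have hd' := dist_bfsParent_add_one (reachable_bfsParent hr) hpu
  have hfin : ((G.bfsHullTree v F).neighborSet (G.bfsParent v u)).Finite :=
    (bfsHull_finite hF).subset (Subgraph.neighborSet_subset_verts _ _)
  refine (Set.one_lt_ncard_iff hfin).mpr ⟨u, _, ⟨hp, hu, bfsTree_adj_bfsParent hr huv⟩,
      ⟨hp, bfsParent_mem_bfsHull hp, (bfsTree_adj_bfsParent (reachable_bfsParent hr) hpu).symm⟩,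
      fun h => by rw [← h] at hd'; omega⟩

theorem exists_adj_not_bfsHullTree_adj_of_leaf (hF : ↑F ⊆ G.nonTreeEdges v t) {w : V}
    (hw : w ∈ (G.bfsHullTree v F).verts) (hwv : w ≠ v)
    (hleaf : ((G.bfsHullTree v F).neighborSet w).ncard = 1) :
    ∃ y, (G.bfsHullGraph v F).Adj w y ∧ ¬ (G.bfsHullTree v F).Adj w y := by
  obtain ⟨e, he, x, hx, j, rfl⟩ := hw
  cases j with
  | zero =>
    obtain ⟨y, rfl⟩ := Sym2.mem_iff_exists.mp hx
    have hG : G.Adj x y := (hF he).1.1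
    exact ⟨y, ⟨mem_bfsHull_of_mem he (Sym2.mem_mk_left x y),
      mem_bfsHull_of_mem he (Sym2.mem_mk_right x y),
      Or.inr ⟨(fromEdgeSet_adj _).mpr ⟨he, hG.ne⟩, hG⟩⟩, fun h => (hF he).2 h.2.2⟩
  | succ j =>
    rw [Function.iterate_succ_apply'] at hwv hleaf
    have := one_lt_ncard_neighborSet_bfsParent hF ⟨e, he, x, hx, j, rfl⟩ hwv
    omega

theorem hasMulticycle_of_subset_nonTreeEdges (hF : ↑F ⊆ G.nonTreeEdges v t)
    (hne : F.Nonempty) : HasMulticycle G F.card t v := by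
  have hv := root_mem_bfsHull hF hne
  refine ⟨G.bfsHullGraph v F, G.bfsHullTree v F, hv, hv, bfsHullTree_le_bfsHullGraph, rfl,
    bfsHull_finite hF, connected_bfsHullGraph hF hne, isTree_bfsHullTree hF hne,
    ncard_edgeSet_bfsHullGraph hF hne, fun w hw hw' => ?_,
    fun w hw hwv hleaf => exists_adj_not_bfsHullTree_adj_of_leaf hF hw hwv hleaf⟩
  rw [dist_bfsHullTree hF hv hw', dist_bfsHullGraph hF hv hw]
  exact ⟨rfl, (bfsHull_subset_closedBall hF hw).2⟩

theorem exists_finset_eq_nonTreeEdges_card_le {k : ℕ}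
    (hno : ∀ k', k < k' → ¬ HasMulticycle G k' t v) :
    ∃ N : Finset (Sym2 V), ↑N = G.nonTreeEdges v t ∧ N.card ≤ k :=
  Set.exists_finset_coe_eq_card_le fun F hF => by
    by_contra! h
    exact hno F.card h (hasMulticycle_of_subset_nonTreeEdges hF (Finset.card_pos.mp (by omega)))

end Multicycle

section Cut

variable {G : SimpleGraph V} {v : V} {t : ℕ}

open Classical in
/-- For an endpoint `x` of the non-tree edge `e`, the edge at `v` whose removal separates `e`
from `v` on the side of `x`: the tree edge into the branch of `x`, or `e` itself when `x = v`. -/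
noncomputable def cutEdge (G : SimpleGraph V) (v : V) (e : Sym2 V) (x : V) : Sym2 V :=
  if x = v then e else s(v, G.bfsBranch v x)

theorem cutEdge_mem_edgeSet {e : Sym2 V} (he : e ∈ G.nonTreeEdges v t) {x : V} (hx : x ∈ e) :
    v ∈ G.cutEdge v e x ∧ G.cutEdge v e x ∈ (ballGraph G v t).edgeSet := by
  by_cases hxv : x = v
  · subst hxv
    simpa [cutEdge] using ⟨hx, he.1⟩
  · have hxB := mem_closedBall_of_mem_edgeSet he.1 hx
    have hd := dist_bfsBranch hxB.1 hxv
    have hadj : G.Adj v (G.bfsBranch v x) := dist_eq_one_iff_adj.mp hd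
    have := hxB.1.pos_dist_of_ne (Ne.symm hxv)
    have := hxB.2
    simp only [cutEdge, if_neg hxv, Sym2.mem_mk_left, true_and]
    exact ⟨hadj, ⟨.refl v, by simp⟩, hadj.reachable,
      (by omega : G.dist v (G.bfsBranch v x) ≤ t)⟩

def intactVerts (G : SimpleGraph V) (v : V) (D : Set (Sym2 V)) : Set V :=
  {u | u = v ∨ s(v, G.bfsBranch v u) ∉ D}

variable {D : Set (Sym2 V)}

theorem bfsTree_adj_and_mem_intactVerts
    (hD : ∀ e ∈ G.nonTreeEdges v t, ∀ x ∈ e, G.cutEdge v e x ∈ D) {a b : V}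
    (ha : a ∈ G.intactVerts v D) (hab : ((ballGraph G v t).deleteEdges D).Adj a b) :
    (G.bfsTree v).Adj a b ∧ b ∈ G.intactVerts v D := by
  obtain ⟨hball, habD⟩ := deleteEdges_adj.mp hab
  have htree : (G.bfsTree v).Adj a b := by
    by_contra hnt
    have hcut := hD _ ⟨hball, hnt⟩ a (Sym2.mem_mk_left a b)
    by_cases hav : a = v
    · rw [cutEdge, if_pos hav] at hcut
      exact habD hcut
    · rw [cutEdge, if_neg hav] at hcut
      exact ha.resolve_left hav hcut
  refine ⟨htree, ?_⟩
  by_cases hbv : b = v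
  · exact Or.inl hbv
  refine Or.inr ?_
  by_cases hav : a = v
  · subst hav
    rwa [bfsBranch_of_bfsTree_adj htree]
  · rw [← bfsBranch_eq_of_bfsTree_adj htree hav hbv]
    exact ha.resolve_left hav

theorem mem_intactVerts_of_walk (hD : ∀ e ∈ G.nonTreeEdges v t, ∀ x ∈ e, G.cutEdge v e x ∈ D)
    {a b : V} (q : ((ballGraph G v t).deleteEdges D).Walk a b) (ha : a ∈ G.intactVerts v D) :
    b ∈ G.intactVerts v D := by
  induction q with
  | nil => exact ha
  | cons h _ ih => exact ih (bfsTree_adj_and_mem_intactVerts hD ha h).2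

theorem edges_subset_bfsTree_of_intact
    (hD : ∀ e ∈ G.nonTreeEdges v t, ∀ x ∈ e, G.cutEdge v e x ∈ D)
    {a b : V} (q : ((ballGraph G v t).deleteEdges D).Walk a b) (ha : a ∈ G.intactVerts v D) :
    ∀ e ∈ q.edges, e ∈ (G.bfsTree v).edgeSet := by
  induction q with
  | nil => simp
  | cons h _ ih =>
    obtain ⟨htree, hx⟩ := bfsTree_adj_and_mem_intactVerts hD ha h
    simpa [htree] using ih hx

end Cut

end SimpleGraph

/-- If `G` contains no `(k',t)`-multicycle for any `k' > k`,
then for every vertex `v` one can remove at most `2k` edges incident to `v`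
from the subgraph `H` induced by the ball of radius `t` around `v` so that the
connected component of `v` in the resulting graph is a tree (contains no
cycle). -/
theorem multicycle_free_ball_almost_tree {V : Type*} (G : SimpleGraph V)
    (k t : ℕ) (hno : ∀ k' : ℕ, k < k' → ∀ s : V, ¬ HasMulticycle G k' t s)
    (v : V) :
    ∃ D : Finset (Sym2 V), D.card ≤ 2 * k ∧
      (∀ e ∈ D, v ∈ e ∧ e ∈ (ballGraph G v t).edgeSet) ∧
      ∀ w : V, ((ballGraph G v t).deleteEdges (D : Set (Sym2 V))).Reachable v w →
        ∀ p : ((ballGraph G v t).deleteEdges (D : Set (Sym2 V))).Walk w w,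
          ¬ p.IsCycle := by
  classical
  obtain ⟨N, hN, hcard⟩ := exists_finset_eq_nonTreeEdges_card_le fun k' hk' => hno k' hk' v
  have hmemN : ∀ e, e ∈ N ↔ e ∈ G.nonTreeEdges v t := fun e => by rw [← hN, Finset.mem_coe]
  set D := N.biUnion fun e => e.toFinset.image (G.cutEdge v e)
  have hcut : ∀ e ∈ G.nonTreeEdges v t, ∀ x ∈ e, G.cutEdge v e x ∈ D := fun e he x hx =>
    Finset.mem_biUnion.mpr
      ⟨e, (hmemN e).mpr he, Finset.mem_image_of_mem _ (Sym2.mem_toFinset.mpr hx)⟩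
  refine ⟨D, (Sym2.card_biUnion_image_toFinset_le N _).trans (by omega), fun e he => ?_,
    fun w ⟨q⟩ p hp => ?_⟩
  · obtain ⟨e', he', he⟩ := Finset.mem_biUnion.mp he
    obtain ⟨x, hx, rfl⟩ := Finset.mem_image.mp he
    exact cutEdge_mem_edgeSet ((hmemN e').mp he') (Sym2.mem_toFinset.mp hx)
  · have hw := mem_intactVerts_of_walk hcut q (Or.inl rfl)
    exact isAcyclic_bfsTree G v _ (hp.transfer (edges_subset_bfsTree_of_intact hcut p hw))
end
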